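/- Let n ≥ 6 and let π be a permutation of {1,…,n} of the form π = A·n·B·(n−1)·C·(n−2)·D, where A, B, C, D are (possibly empty) words over {1,…,n−3} and the total length of B, C, D is at least 2. Then ssc(π) = n−3 if and only if the word S(A)·S(B)·S(C)·S(D) ends with the suffix (n−3),1. -/

import Mathlib

/-- The largest letter of a word (`0` for the empty word). -/
def listMax (l : List ℕ) : ℕ := l.foldr max 0

lemma listMax_mem {l : List ℕ} (h : l ≠ []) : listMax l ∈ l := by
  induction l with
  | nil => simp at h
  | cons a t ih =>
    rcases eq_or_ne t [] with rfl | ht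
    · simp [listMax]
    · have ht' := ih ht
      have hcons : listMax (a :: t) = max a (listMax t) := rfl
      rcases le_total a (listMax t) with hle | hle
      · rw [hcons, max_eq_right hle]; exact List.mem_cons_of_mem _ ht'
      · rw [hcons, max_eq_left hle]; exact List.mem_cons_self

/-- The stack-sorting operator `S`: `S` of the empty word is the empty word, and
if `π` is nonempty, writing `π = L·m·R` where `m` is the greatest letter of `π`,
then `S(π) = S(L)·S(R)·m`. -/
def stackSort : List ℕ → List ℕ
  | [] => []
  | x :: xs =>
    stackSort ((x :: xs).take ((x :: xs).idxOf (listMax (x :: xs)))) ++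
      stackSort ((x :: xs).drop ((x :: xs).idxOf (listMax (x :: xs)) + 1)) ++
      [listMax (x :: xs)]
termination_by l => l.length
decreasing_by
  · have hm : listMax (x :: xs) ∈ x :: xs := listMax_mem (by simp)
    have hi : (x :: xs).idxOf (listMax (x :: xs)) < (x :: xs).length :=
      List.idxOf_lt_length_iff.mpr hm
    simp only [List.length_take, List.length_cons] at *
    omega
  · simp only [List.length_drop, List.length_cons]
    omega

/-- `π` is a permutation of `{1, …, n}`, viewed as a word containing each of
`1, …, n` exactly once. -/
def IsPermWord (n : ℕ) (π : List ℕ) : Prop := π.Perm (List.range' 1 n)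

/-- The stack-sorting complexity of `π`: the least `k ≥ 0` such that `S^k(π)`
is the identity word `1, 2, …, n` (where `n` is the length of `π`). -/
noncomputable def ssc (π : List ℕ) : ℕ :=
  sInf {k : ℕ | stackSort^[k] π = List.range' 1 π.length}

/-!
The letters `n, n-1, n-2` are the three largest and occur in decreasing order, so
`S(π) = W·(n-2)·(n-1)·n` with `W = S(A)·S(B)·S(C)·S(D)` a permutation of `{1,…,n-3}`. Since `π` is
not sorted and trailing fixed points never move, `ssc(π) = 1 + ssc(W)`, and the theorem reduces to
the classical fact that a permutation `σ` of `{1,…,m}`, `m ≥ 2`, has `ssc(σ) = m - 1` (the maximum,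
by West's bound) iff `σ` ends in `m, 1`. That is proved by induction on `m`: writing
`σ = X·m·Y`, we get `ssc(σ) = 1 + ssc(S(X)·S(Y))`, and since the last letter of `S(τ)` is the
largest letter of `τ`, the word `S(X)·S(Y)` ends in `m-1, 1` exactly when `Y = 1`.
-/
open scoped List

lemma listMax_le_iff {l : List ℕ} {m : ℕ} : listMax l ≤ m ↔ ∀ x ∈ l, x ≤ m := by
  induction l with
  | nil => simp [listMax]
  | cons a t ih =>
    change max a (listMax t) ≤ m ↔ _
    rw [max_le_iff, ih, List.forall_mem_cons]

lemma listMax_eq_of_mem {l : List ℕ} {m : ℕ} (hm : m ∈ l) (h : ∀ x ∈ l, x ≤ m) :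
    listMax l = m :=
  le_antisymm (listMax_le_iff.2 h) (listMax_le_iff.1 le_rfl m hm)

lemma stackSort_of_ne_nil {l : List ℕ} (h : l ≠ []) :
    stackSort l = stackSort (l.take (l.idxOf (listMax l))) ++
      stackSort (l.drop (l.idxOf (listMax l) + 1)) ++ [listMax l] := by
  cases l with
  | nil => exact absurd rfl h
  | cons x xs => rw [stackSort]

@[simp]
lemma stackSort_nil : stackSort [] = [] := by
  simp [stackSort]

lemma exists_stackSort_eq_concat_listMax {l : List ℕ} (h : l ≠ []) :
    ∃ l', stackSort l = l' ++ [listMax l] :=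
  ⟨_, stackSort_of_ne_nil h⟩

lemma stackSort_append_cons {X Y : List ℕ} {m : ℕ} (hX : ∀ x ∈ X, x < m)
    (hY : ∀ y ∈ Y, y ≤ m) : stackSort (X ++ m :: Y) = stackSort X ++ stackSort Y ++ [m] := by
  have hmax : listMax (X ++ m :: Y) = m := by
    refine listMax_eq_of_mem (by simp) fun x hx => ?_
    simp only [List.mem_append, List.mem_cons] at hx
    rcases hx with hx | rfl | hx
    exacts [(hX x hx).le, le_rfl, hY x hx]
  have hidx : (X ++ m :: Y).idxOf m = X.length := by
    rw [List.idxOf_append_of_notMem fun h => (hX m h).false]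
    simp
  rw [stackSort_of_ne_nil (by simp), hmax, hidx]
  simp [List.drop_append, List.drop_of_length_le]

lemma stackSort_perm (l : List ℕ) : stackSort l ~ l := by
  rcases eq_or_ne l [] with rfl | h
  · simp
  set i := l.idxOf (listMax l)
  have hi : i < l.length := List.idxOf_lt_length_iff.2 (listMax_mem h)
  have hl : l = l.take i ++ listMax l :: l.drop (i + 1) := by
    rw [← List.getElem_idxOf hi, ← List.drop_eq_getElem_cons hi, List.take_append_drop]
  rw [stackSort_of_ne_nil h]
  calc stackSort (l.take i) ++ stackSort (l.drop (i + 1)) ++ [listMax l]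
      ~ l.take i ++ l.drop (i + 1) ++ [listMax l] :=
        ((stackSort_perm _).append (stackSort_perm _)).append_right _
    _ ~ l.take i ++ listMax l :: l.drop (i + 1) := by
        rw [List.append_assoc]; exact (List.perm_append_comm.append_left _).trans (by simp)
    _ = l := hl.symm
termination_by l.length
decreasing_by
  · simp only [List.length_take]; omega
  · simp only [List.length_drop]; omega

lemma stackSort_iterate_perm (k : ℕ) (l : List ℕ) : stackSort^[k] l ~ l := by
  induction k with
  | zero => rfl
  | succ k ih => rw [Function.iterate_succ_apply']; exact (stackSort_perm _).trans ih

lemma stackSort_append_singleton {U : List ℕ} {a : ℕ} (hU : ∀ x ∈ U, x < a) :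
    stackSort (U ++ [a]) = stackSort U ++ [a] := by
  simpa using stackSort_append_cons hU (Y := []) (by simp)

@[simp]
lemma stackSort_singleton (a : ℕ) : stackSort [a] = [a] := by
  simpa using stackSort_append_singleton (U := []) (a := a) (by simp)

lemma stackSort_iterate_append_singleton {U : List ℕ} {a : ℕ} (hU : ∀ x ∈ U, x < a)
    (k : ℕ) :
    stackSort^[k] (U ++ [a]) = stackSort^[k] U ++ [a] := by
  induction k with
  | zero => rfl
  | succ k ih =>
    rw [Function.iterate_succ_apply', Function.iterate_succ_apply', ih,
      stackSort_append_singleton fun x hx => hU x ((stackSort_iterate_perm k U).subset hx)]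

lemma range'_one_succ (m : ℕ) : List.range' 1 (m + 1) = List.range' 1 m ++ [m + 1] := by
  rw [List.range'_1_concat, Nat.add_comm]

lemma lt_succ_of_mem_of_perm_range' {l : List ℕ} {m : ℕ} (h : l ~ List.range' 1 m) :
    ∀ x ∈ l, x < m + 1 := fun x hx => by
  have := List.mem_range'_1.1 (h.subset hx); omega

lemma exists_eq_append_cons_of_perm_range' {σ : List ℕ} {m : ℕ}
    (h : σ ~ List.range' 1 (m + 1)) :
    ∃ X Y, σ = X ++ (m + 1) :: Y ∧ X ++ Y ~ List.range' 1 m := by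
  have hm : m + 1 ∈ List.range' 1 (m + 1) := by simp
  obtain ⟨X, Y, rfl⟩ := List.append_of_mem (h.symm.subset hm)
  refine ⟨X, Y, rfl, (List.perm_cons (m + 1)).1 ?_⟩
  calc (m + 1) :: (X ++ Y) ~ X ++ (m + 1) :: Y := List.perm_middle.symm
    _ ~ List.range' 1 m ++ [m + 1] := range'_one_succ m ▸ h
    _ ~ (m + 1) :: List.range' 1 m := List.perm_append_singleton _ _

lemma stackSort_append_cons_of_perm_range' {X Y : List ℕ} {m : ℕ}
    (h : X ++ Y ~ List.range' 1 m) :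
    stackSort (X ++ (m + 1) :: Y) = (stackSort X ++ stackSort Y) ++ [m + 1] :=
  stackSort_append_cons (fun x hx => lt_succ_of_mem_of_perm_range' h x (by simp [hx]))
    (fun y hy => (lt_succ_of_mem_of_perm_range' h y (by simp [hy])).le)

lemma stackSort_append_stackSort_perm {X Y l : List ℕ} (h : X ++ Y ~ l) :
    stackSort X ++ stackSort Y ~ l :=
  ((stackSort_perm X).append (stackSort_perm Y)).trans h

theorem stackSort_iterate_of_perm_range' {σ : List ℕ} {m : ℕ}
    (h : σ ~ List.range' 1 (m + 1)) :
    stackSort^[m] σ = List.range' 1 (m + 1) := by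
  induction m generalizing σ with
  | zero => exact List.perm_singleton.1 h
  | succ m ih =>
    obtain ⟨X, Y, rfl, hXY⟩ := exists_eq_append_cons_of_perm_range' h
    have hT := stackSort_append_stackSort_perm hXY
    rw [Function.iterate_succ_apply, stackSort_append_cons_of_perm_range' hXY,
      stackSort_iterate_append_singleton (lt_succ_of_mem_of_perm_range' hT), ih hT,
      range'_one_succ (m + 1)]

lemma ssc_eq_sInf {σ : List ℕ} {m : ℕ} (h : σ ~ List.range' 1 m) :
    ssc σ = sInf {k | stackSort^[k] σ = List.range' 1 m} := by
  rw [ssc, h.length_eq, List.length_range']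

lemma ssc_range' (m : ℕ) : ssc (List.range' 1 m) = 0 :=
  (ssc_eq_sInf (List.Perm.refl _)).trans (Nat.sInf_eq_zero.2 (Or.inl rfl))

lemma ssc_append_singleton {U : List ℕ} {r : ℕ} (hU : U ~ List.range' 1 r) :
    ssc (U ++ [r + 1]) = ssc U := by
  have hU' : U ++ [r + 1] ~ List.range' 1 (r + 1) := range'_one_succ r ▸ hU.append_right _
  simp only [ssc_eq_sInf hU', ssc_eq_sInf hU,
    stackSort_iterate_append_singleton (lt_succ_of_mem_of_perm_range' hU), range'_one_succ,
    List.append_cancel_right_eq]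

lemma ssc_append_range' {U : List ℕ} {r : ℕ} (hU : U ~ List.range' 1 r) (j : ℕ) :
    ssc (U ++ List.range' (r + 1) j) = ssc U := by
  induction j with
  | zero => simp
  | succ j ih =>
    have hUj : U ++ List.range' (r + 1) j ~ List.range' 1 (r + j) := by
      rw [Nat.add_comm r 1, ← List.range'_append_1]; exact hU.append_right _
    rw [List.range'_1_concat, ← List.append_assoc, show r + 1 + j = r + j + 1 by omega,
      ssc_append_singleton hUj, ih]

lemma ssc_stackSort_add_one {σ : List ℕ} {m : ℕ} (h : σ ~ List.range' 1 (m + 1))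
    (hne : σ ≠ List.range' 1 (m + 1)) : ssc (stackSort σ) + 1 = ssc σ := by
  rw [ssc_eq_sInf h, ssc_eq_sInf ((stackSort_perm σ).trans h)]
  refine Nat.sInf_add (p := fun k => stackSort^[k] σ = List.range' 1 (m + 1))
    (Nat.one_le_iff_ne_zero.2 fun h0 => ?_)
  rcases Nat.sInf_eq_zero.1 h0 with h0 | h0
  · exact hne h0
  · exact Set.eq_empty_iff_forall_notMem.1 h0 m (stackSort_iterate_of_perm_range' h)

lemma ssc_append_cons_of_perm_range' {X Y : List ℕ} {m : ℕ} (h : X ++ Y ~ List.range' 1 m)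
    (hne : X ++ (m + 1) :: Y ≠ List.range' 1 (m + 1)) :
    ssc (X ++ (m + 1) :: Y) = ssc (stackSort X ++ stackSort Y) + 1 := by
  have h' : X ++ (m + 1) :: Y ~ List.range' 1 (m + 1) := by
    rw [range'_one_succ]
    exact (List.perm_middle.trans ((List.perm_cons _).2 h)).trans
      (List.perm_append_singleton _ _).symm
  rw [← ssc_stackSort_add_one h' hne, stackSort_append_cons_of_perm_range' h,
    ssc_append_singleton (stackSort_append_stackSort_perm h)]

lemma exists_append_cons_eq_append_pair_iff {α : Type*} {X Y : List α} {a b : α} (hX : a ∉ X)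
    (hY : a ∉ Y) : (∃ w, X ++ a :: Y = w ++ [a, b]) ↔ Y = [b] := by
  constructor
  · rintro ⟨w, hw⟩
    exact ((List.append_cons_inj_of_notMem hX hY).1 hw).2.2
  · rintro rfl
    exact ⟨X, rfl⟩

lemma exists_stackSort_append_eq_append_pair_iff {X Y : List ℕ} {m : ℕ} (hm : 2 ≤ m)
    (h : X ++ Y ~ List.range' 1 m) :
    (∃ w, stackSort X ++ stackSort Y = w ++ [m, 1]) ↔ Y = [1] := by
  have hmem : ∀ x ∈ X ++ Y, 1 ≤ x ∧ x ≤ m := fun x hx => by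
    have := List.mem_range'_1.1 (h.subset hx); omega
  have hmXY : m ∈ X ++ Y := h.symm.subset (List.mem_range'_1.2 ⟨by omega, by omega⟩)
  constructor
  · rintro ⟨w, hw⟩
    rw [show w ++ [m, 1] = (w ++ [m]) ++ [1] by simp] at hw
    rcases eq_or_ne Y [] with rfl | hY
    · have hmX : m ∈ X := by simpa using hmXY
      obtain ⟨l, hl⟩ := exists_stackSort_eq_concat_listMax (List.ne_nil_of_mem hmX)
      rw [stackSort_nil, List.append_nil, hl] at hw
      have := listMax_le_iff.1 (List.append_singleton_inj.1 hw).2.le m hmX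
      omega
    · obtain ⟨l, hl⟩ := exists_stackSort_eq_concat_listMax hY
      rw [hl, ← List.append_assoc] at hw
      have hY1 : ∀ y ∈ Y, y = 1 := fun y hy => by
        have := listMax_le_iff.1 (List.append_singleton_inj.1 hw).2.le y hy
        have := (hmem y (List.mem_append_right X hy)).1
        omega
      have hrep := List.eq_replicate_iff.2 ⟨rfl, hY1⟩
      have hnd : Y.Nodup :=
        (h.nodup_iff.2 List.nodup_range').sublist (List.sublist_append_right X Y)
      have hlen : Y.length = 1 := by
        have := List.nodup_replicate.1 (hrep ▸ hnd)
        have := List.length_pos_iff.2 hY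
        omega
      rw [hrep, hlen]
      rfl
  · rintro rfl
    have hmX : m ∈ X := by simpa [show m ≠ 1 by omega] using hmXY
    obtain ⟨l, hl⟩ := exists_stackSort_eq_concat_listMax (List.ne_nil_of_mem hmX)
    refine ⟨l, ?_⟩
    rw [hl, listMax_eq_of_mem hmX fun x hx => (hmem x (List.mem_append_left _ hx)).2]
    simp

theorem ssc_eq_sub_one_iff {σ : List ℕ} {m : ℕ} (hm : 2 ≤ m) (h : σ ~ List.range' 1 m) :
    ssc σ = m - 1 ↔ ∃ w, σ = w ++ [m, 1] := by
  induction m, hm using Nat.le_induction generalizing σ with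
  | base =>
    obtain ⟨X, Y, rfl, hXY⟩ := exists_eq_append_cons_of_perm_range' (m := 1) h
    rcases List.append_eq_singleton_iff.1 (List.perm_singleton.1 hXY) with
      ⟨rfl, rfl⟩ | ⟨rfl, rfl⟩
    · rw [ssc_append_cons_of_perm_range' hXY (by decide)]
      exact ⟨fun _ => ⟨[], rfl⟩, fun _ => by simpa using ssc_range' 1⟩
    · refine iff_of_false (fun h2 => ?_) fun ⟨w, hw⟩ => ?_
      · rw [show [1] ++ [1 + 1] = List.range' 1 2 from rfl, ssc_range'] at h2
        omega
      · simpa using congrArg List.getLast? hw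
  | succ m hm ih =>
    by_cases hid : σ = List.range' 1 (m + 1)
    · have hm' : m + 1 ∉ List.range' 1 m := fun h => by have := List.mem_range'_1.1 h; omega
      rw [hid, ssc_range', range'_one_succ, exists_append_cons_eq_append_pair_iff hm' (by simp)]
      exact iff_of_false (by omega) (by simp)
    obtain ⟨X, Y, rfl, hXY⟩ := exists_eq_append_cons_of_perm_range' h
    have hX : m + 1 ∉ X := fun hx => (lt_succ_of_mem_of_perm_range' hXY _ (by simp [hx])).false
    have hY : m + 1 ∉ Y := fun hy => (lt_succ_of_mem_of_perm_range' hXY _ (by simp [hy])).false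
    rw [ssc_append_cons_of_perm_range' hXY hid, exists_append_cons_eq_append_pair_iff hX hY,
      ← exists_stackSort_append_eq_append_pair_iff hm hXY,
      ← ih (stackSort_append_stackSort_perm hXY), Nat.add_sub_cancel]
    omega

lemma append_ne_range' {l₁ l₂ : List ℕ} {x y s n : ℕ} (hx : x ∈ l₁) (hy : y ∈ l₂)
    (hyx : y ≤ x) : l₁ ++ l₂ ≠ List.range' s n := fun h =>
  hyx.not_gt ((List.pairwise_append.1 (h ▸ List.pairwise_lt_range')).2.2 x hx y hy)

lemma stackSort_of_decreasing_peaks {A B C D : List ℕ} {x y z : ℕ}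
    (hABCD : ∀ w ∈ A ++ B ++ C ++ D, w < x) (hxy : x < y) (hyz : y < z) :
    stackSort (A ++ [z] ++ B ++ [y] ++ C ++ [x] ++ D) =
      stackSort A ++ stackSort B ++ stackSort C ++ stackSort D ++ [x, y, z] := by
  simp only [List.mem_append, or_imp, forall_and] at hABCD
  obtain ⟨⟨⟨hA, hB⟩, hC⟩, hD⟩ := hABCD
  rw [show A ++ [z] ++ B ++ [y] ++ C ++ [x] ++ D = A ++ z :: (B ++ y :: (C ++ x :: D)) by simp,
    stackSort_append_cons, stackSort_append_cons, stackSort_append_cons]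
  · simp
  all_goals grind

theorem ssc_eq_n_sub_three_iff_split_general (n : ℕ) (hn : 6 ≤ n) (A B C D : List ℕ)
    (hABCD : ∀ x ∈ A ++ B ++ C ++ D, 1 ≤ x ∧ x ≤ n - 3)
    (hπ : IsPermWord n (A ++ [n] ++ B ++ [n - 1] ++ C ++ [n - 2] ++ D)) :
    ssc (A ++ [n] ++ B ++ [n - 1] ++ C ++ [n - 2] ++ D) = n - 3 ↔
      ∃ w : List ℕ,
        stackSort A ++ stackSort B ++ stackSort C ++ stackSort D = w ++ [n - 3, 1] := by
  obtain ⟨a, rfl⟩ : ∃ a, n = a + 3 := ⟨n - 3, by omega⟩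
  simp only [show a + 3 - 1 = a + 2 by omega, show a + 3 - 2 = a + 1 by omega,
    Nat.add_sub_cancel] at hABCD hπ ⊢
  set W := stackSort A ++ stackSort B ++ stackSort C ++ stackSort D
  have hS : stackSort (A ++ [a + 3] ++ B ++ [a + 2] ++ C ++ [a + 1] ++ D) =
      W ++ List.range' (a + 1) 3 :=
    stackSort_of_decreasing_peaks (fun x hx => by have := hABCD x hx; omega) (by omega) (by omega)
  have hW : W ~ List.range' 1 a := by
    have hrange : List.range' 1 a ++ List.range' (a + 1) 3 = List.range' 1 (a + 3) := by
      rw [Nat.add_comm a 1, List.range'_append_1]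
    rw [← List.perm_append_right_iff (List.range' (a + 1) 3), ← hS, hrange]
    exact (stackSort_perm _).trans hπ
  have hne : A ++ [a + 3] ++ B ++ [a + 2] ++ C ++ [a + 1] ++ D ≠ List.range' 1 (a + 3) := by
    rw [show A ++ [a + 3] ++ B ++ [a + 2] ++ C ++ [a + 1] ++ D =
      (A ++ [a + 3] ++ B) ++ ([a + 2] ++ C ++ [a + 1] ++ D) by simp]
    exact append_ne_range' (x := a + 3) (y := a + 2) (by simp) (by simp) (by omega)
  rw [← ssc_stackSort_add_one (m := a + 2) hπ hne, hS, ssc_append_range' hW,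
    ← ssc_eq_sub_one_iff (by omega) hW]
  omega

/-- Let `n ≥ 6` and let `π = A·n·B·(n−1)·C·(n−2)·D` be a permutation of
`{1,…,n}`, where `A, B, C, D` are words over `{1,…,n−3}` and the total length
of `B, C, D` is at least `2`. Then `ssc(π) = n−3` if and only if the word
`S(A)·S(B)·S(C)·S(D)` ends with the suffix `(n−3), 1`. -/
theorem ssc_eq_n_sub_three_iff_split (n : ℕ) (hn : 6 ≤ n) (A B C D : List ℕ)
    (hABCD : ∀ x ∈ A ++ B ++ C ++ D, 1 ≤ x ∧ x ≤ n - 3)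
    (hlen : 2 ≤ B.length + C.length + D.length)
    (hπ : IsPermWord n (A ++ [n] ++ B ++ [n - 1] ++ C ++ [n - 2] ++ D)) :
    ssc (A ++ [n] ++ B ++ [n - 1] ++ C ++ [n - 2] ++ D) = n - 3 ↔
      ∃ w : List ℕ,
        stackSort A ++ stackSort B ++ stackSort C ++ stackSort D = w ++ [n - 3, 1] :=
  ssc_eq_n_sub_three_iff_split_general n hn A B C D hABCD hπ
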